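/- arXiv:2405.09356 — 7 statements merged into one kernel-verified Lean document; each statement's English description precedes it below -/
import Mathlib

section
/- Let I and J be nonempty finite sets and R : I × J → ℝ. Let x : I → ℝ satisfy x_i ≥ 0 for all i and Σ_{i∈I} x_i = 1, let q : J → ℝ satisfy q_j ∈ {0,1} for all j and Σ_{j∈J} q_j = 1, and let f ∈ ℝ satisfy: for every j' ∈ J with q_{j'} = 1, f = Σ_{i∈I} R_{i,j'} x_i. Then for every j ∈ J, f ≤ Σ_{i∈I} R_{i,j} x_i + Σ_{j'∈J, j'≠j} (max_{i∈I} (R_{i,j'} − R_{i,j})) · q_{j'}. -/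
/-! Since `q` is the indicator of a single follower strategy `j₀`, the inequality reduces to
`∑ i, (R i j₀ - R i j) * x i ≤ max_i (R i j₀ - R i j)`: a convex combination is at most the
largest of its terms. -/

open Finset

theorem exists_eq_pi_single_of_forall_eq_zero_or_one_of_sum_eq_one {ι R : Type*} [Fintype ι]
    [DecidableEq ι] [AddCommMonoidWithOne R] [CharZero R] {q : ι → R}
    (h01 : ∀ i, q i = 0 ∨ q i = 1) (h1 : ∑ i, q i = 1) : ∃ i₀, q = Pi.single i₀ 1 := by
  classical
  have hq : q = fun i => if q i = 1 then 1 else 0 := by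
    funext i; rcases h01 i with h | h <;> simp [h]
  have hcard : #{i | q i = 1} = 1 := by
    rw [hq, sum_boole] at h1
    exact_mod_cast h1
  obtain ⟨i₀, hi₀⟩ := card_eq_one.1 hcard
  have hiff : ∀ i, q i = 1 ↔ i = i₀ := fun i => by
    simpa using congrArg (i ∈ ·) hi₀
  refine ⟨i₀, funext fun i => ?_⟩
  rcases h01 i with h | h
  · have : i ≠ i₀ := fun hi => by simp [(hiff i).2 hi] at h
    simp [h, this]
  · obtain rfl := (hiff i).1 h
    simp [h]

theorem Finset.sum_mul_le_sup'_of_sum_eq_one {ι R : Type*} [Semiring R] [LinearOrder R]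
    [IsOrderedRing R] {s : Finset ι} (hs : s.Nonempty) (c x : ι → R) (hx0 : ∀ i ∈ s, 0 ≤ x i)
    (hx1 : ∑ i ∈ s, x i = 1) : ∑ i ∈ s, c i * x i ≤ s.sup' hs c :=
  calc ∑ i ∈ s, c i * x i ≤ ∑ i ∈ s, s.sup' hs c * x i :=
        sum_le_sum fun i hi => mul_le_mul_of_nonneg_right (le_sup' c hi) (hx0 i hi)
    _ = s.sup' hs c := by rw [← mul_sum, hx1, mul_one]

theorem stmt_0_general {I J : Type*} [Fintype I] [Fintype J] [DecidableEq J] [Nonempty I]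
    (R : I → J → ℝ) (x : I → ℝ) (q : J → ℝ) (f : ℝ)
    (hx0 : ∀ i, 0 ≤ x i) (hx1 : ∑ i, x i = 1)
    (hq01 : ∀ j, q j = 0 ∨ q j = 1) (hq1 : ∑ j, q j = 1)
    (hf : ∀ j', q j' = 1 → f = ∑ i, R i j' * x i) :
    ∀ j, f ≤ ∑ i, R i j * x i +
      ∑ j' ∈ Finset.univ.filter (fun j' => j' ≠ j),
        (Finset.univ.sup' Finset.univ_nonempty (fun i => R i j' - R i j)) * q j' := by
  intro j
  obtain ⟨j₀, rfl⟩ := exists_eq_pi_single_of_forall_eq_zero_or_one_of_sum_eq_one hq01 hq1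
  set M : J → ℝ := fun j' => univ.sup' univ_nonempty (fun i => R i j' - R i j)
  -- The omitted term `j' = j` vanishes anyway, since `M j = max_i 0 = 0`.
  have hfilter : ∑ j' ∈ univ.filter (· ≠ j), M j' * (Pi.single j₀ 1 : J → ℝ) j' = M j₀ := by
    rw [sum_filter_of_ne (p := (· ≠ j)) fun j' _ h hj' => h (by simp [M, hj']),
      Fintype.sum_eq_single j₀]
    · simp
    · intro j' hj'
      simp [hj']
  rw [hfilter, hf j₀ (by simp)]
  have hgap := sum_mul_le_sup'_of_sum_eq_one univ_nonempty (fun i => R i j₀ - R i j) x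
    (fun i _ => hx0 i) hx1
  simp only [sub_mul, sum_sub_distrib] at hgap
  linarith

theorem stmt_0 {I J : Type*} [Fintype I] [Fintype J] [DecidableEq I] [DecidableEq J] [Nonempty I] [Nonempty J]
    (R : I → J → ℝ) (x : I → ℝ) (q : J → ℝ) (f : ℝ)
    (hx0 : ∀ i, 0 ≤ x i) (hx1 : ∑ i, x i = 1)
    (hq01 : ∀ j, q j = 0 ∨ q j = 1) (hq1 : ∑ j, q j = 1)
    (hf : ∀ j', q j' = 1 → f = ∑ i, R i j' * x i) :
    ∀ j, f ≤ ∑ i, R i j * x i +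
      ∑ j' ∈ Finset.univ.filter (fun j' => j' ≠ j),
        (Finset.univ.sup' Finset.univ_nonempty (fun i => R i j' - R i j)) * q j' :=
  stmt_0_general R x q f hx0 hx1 hq01 hq1 hf
end

section
/- Let I and J be nonempty finite sets and R : I × J → ℝ. Let q : J → ℝ satisfy q_j ∈ {0,1} for all j and Σ_{j∈J} q_j = 1. Then for every j ∈ J, Σ_{j'∈J, j'≠j} (max_{i∈I} (R_{i,j'} − R_{i,j})) · q_{j'} ≤ (max_{l∈J} max_{i∈I} (R_{i,l} − R_{i,j})) · (1 − q_j). Consequently, for any x in the simplex over I and any f with f = Σ_{i∈I} R_{i,j'} x_i whenever q_{j'} = 1, the inequality f ≤ Σ_{i∈I} R_{i,j} x_i + Σ_{j'≠j} (max_{i∈I}(R_{i,j'} − R_{i,j})) q_{j'} is at least as tight as the big-M constraint f ≤ Σ_{i∈I} R_{i,j} x_i + (max_{l∈J} max_{i∈I} (R_{i,l} − R_{i,j}))(1 − q_j). -/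
/-!
Each coefficient `max_i (R i j' - R i j)` is at most `M = max_l max_i (R i l - R i j)`, and since
`q` is nonnegative with total mass one, the mass of `q` off `j` is exactly `1 - q j`. Hence the
left-hand side is at most `M * (1 - q j)`; the second claim adds `∑ i, R i j * x i` to both sides.
-/

open Finset

theorem Finset.sum_mul_le_sup'_mul_sum {ι : Type*} {s t : Finset ι} (hst : s ⊆ t)
    (ht : t.Nonempty) (a w : ι → ℝ) (hw : ∀ i ∈ s, 0 ≤ w i) :
    ∑ i ∈ s, a i * w i ≤ t.sup' ht a * ∑ i ∈ s, w i := by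
  rw [Finset.mul_sum]
  exact sum_le_sum fun i hi => mul_le_mul_of_nonneg_right (le_sup' a (hst hi)) (hw i hi)

theorem Finset.sum_filter_ne_eq_sub {ι : Type*} [Fintype ι] [DecidableEq ι] (q : ι → ℝ) (j : ι) :
    ∑ j' ∈ univ.filter (fun j' => j' ≠ j), q j' = ∑ j', q j' - q j := by
  rw [filter_ne', sum_erase_eq_sub (mem_univ j)]

theorem sum_filter_ne_sup'_mul_le_sup'_sup'_mul_one_sub {I J : Type*} [Fintype I] [Fintype J]
    [DecidableEq J] [Nonempty I] [Nonempty J] (R : I → J → ℝ) (q : J → ℝ)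
    (hq_nonneg : ∀ j, 0 ≤ q j) (hq1 : ∑ j, q j = 1) (j : J) :
    ∑ j' ∈ univ.filter (fun j' => j' ≠ j), univ.sup' univ_nonempty (fun i => R i j' - R i j) * q j'
      ≤ univ.sup' univ_nonempty (fun l => univ.sup' univ_nonempty (fun i => R i l - R i j))
          * (1 - q j) := by
  calc _ ≤ _ := sum_mul_le_sup'_mul_sum (subset_univ _) univ_nonempty _ q fun j' _ => hq_nonneg j'
    _ = _ := by rw [sum_filter_ne_eq_sub, hq1]

theorem stmt_1_general {I J : Type*} [Fintype I] [Fintype J] [DecidableEq J] [Nonempty I] [Nonempty J]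
    (R : I → J → ℝ) (q : J → ℝ)
    (hq01 : ∀ j, q j = 0 ∨ q j = 1) (hq1 : ∑ j, q j = 1) :
    (∀ j, ∑ j' ∈ Finset.univ.filter (fun j' => j' ≠ j),
        (Finset.univ.sup' Finset.univ_nonempty (fun i => R i j' - R i j)) * q j'
      ≤ (Finset.univ.sup' Finset.univ_nonempty (fun l =>
          Finset.univ.sup' Finset.univ_nonempty (fun i => R i l - R i j))) * (1 - q j)) ∧
    (∀ x : I → ℝ, (∀ i, 0 ≤ x i) → ∑ i, x i = 1 →
      ∀ f : ℝ, (∀ j', q j' = 1 → f = ∑ i, R i j' * x i) →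
      ∀ j, ∑ i, R i j * x i +
          ∑ j' ∈ Finset.univ.filter (fun j' => j' ≠ j),
            (Finset.univ.sup' Finset.univ_nonempty (fun i => R i j' - R i j)) * q j'
        ≤ ∑ i, R i j * x i +
          (Finset.univ.sup' Finset.univ_nonempty (fun l =>
            Finset.univ.sup' Finset.univ_nonempty (fun i => R i l - R i j))) * (1 - q j)) := by
  have hq_nonneg : ∀ j, 0 ≤ q j := fun j => by rcases hq01 j with h | h <;> simp [h]
  have dominance := sum_filter_ne_sup'_mul_le_sup'_sup'_mul_one_sub R q hq_nonneg hq1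
  exact ⟨dominance, fun x _ _ f _ j => add_le_add_right (dominance j) _⟩

theorem stmt_1 {I J : Type*} [Fintype I] [Fintype J] [DecidableEq I] [DecidableEq J] [Nonempty I] [Nonempty J]
    (R : I → J → ℝ) (q : J → ℝ)
    (hq01 : ∀ j, q j = 0 ∨ q j = 1) (hq1 : ∑ j, q j = 1) :
    (∀ j, ∑ j' ∈ Finset.univ.filter (fun j' => j' ≠ j),
        (Finset.univ.sup' Finset.univ_nonempty (fun i => R i j' - R i j)) * q j'
      ≤ (Finset.univ.sup' Finset.univ_nonempty (fun l =>
          Finset.univ.sup' Finset.univ_nonempty (fun i => R i l - R i j))) * (1 - q j)) ∧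
    (∀ x : I → ℝ, (∀ i, 0 ≤ x i) → ∑ i, x i = 1 →
      ∀ f : ℝ, (∀ j', q j' = 1 → f = ∑ i, R i j' * x i) →
      ∀ j, ∑ i, R i j * x i +
          ∑ j' ∈ Finset.univ.filter (fun j' => j' ≠ j),
            (Finset.univ.sup' Finset.univ_nonempty (fun i => R i j' - R i j)) * q j'
        ≤ ∑ i, R i j * x i +
          (Finset.univ.sup' Finset.univ_nonempty (fun l =>
            Finset.univ.sup' Finset.univ_nonempty (fun i => R i l - R i j))) * (1 - q j)) :=
  stmt_1_general R q hq01 hq1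
end

section
/- Let I and J be nonempty finite sets and R : I × J → ℝ. Let x : I → ℝ satisfy x_i ≥ 0 for all i and Σ_{i∈I} x_i = 1, let q : J → ℝ satisfy q_j ∈ {0,1} for all j and Σ_{j∈J} q_j = 1, and let f ∈ ℝ satisfy: for every j ∈ J with q_j = 1, f = Σ_{i∈I} R_{i,j} x_i. Then for every i ∈ I, f ≤ Σ_{j∈J} R_{i,j} q_j + Σ_{i'∈I, i'≠i} (max_{j∈J} (R_{i',j} − R_{i,j})) · x_{i'}. -/
/-! Against the follower's pure strategy `j₀`, write `f = ∑ R i' j₀ x i'` as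
`R i j₀ + ∑_{i' ≠ i} (R i' j₀ - R i j₀) x i'`, using `∑ x = 1`, and bound each difference
`R i' j₀ - R i j₀` by its maximum over all follower strategies. -/

open Finset

theorem exists_eq_one_and_eq_zero_of_zero_or_one {J R : Type*} [Fintype J]
    [AddCommMonoidWithOne R] [CharZero R] {q : J → R}
    (hq01 : ∀ j, q j = 0 ∨ q j = 1) (hq1 : ∑ j, q j = 1) :
    ∃ j₀, q j₀ = 1 ∧ ∀ j ≠ j₀, q j = 0 := by
  classical
  have hcard : #{j | q j = 1} = 1 := by
    have hsum : ∑ j, q j = ∑ j, if q j = 1 then (1 : R) else 0 :=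
      sum_congr rfl fun j _ => by rcases hq01 j with h | h <;> simp [h]
    rwa [hsum, sum_boole, Nat.cast_eq_one] at hq1
  obtain ⟨j₀, hj₀⟩ := card_eq_one.mp hcard
  have hone : ∀ j, q j = 1 ↔ j = j₀ := fun j => by simpa using Finset.ext_iff.mp hj₀ j
  exact ⟨j₀, (hone j₀).mpr rfl, fun j hj => (hq01 j).resolve_right (mt (hone j).mp hj)⟩

theorem sum_mul_le_add_sum_ne_mul {ι 𝕜 : Type*} [Fintype ι] [DecidableEq ι]
    [CommRing 𝕜] [PartialOrder 𝕜] [IsOrderedRing 𝕜] (v c x : ι → 𝕜) (i : ι)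
    (hx0 : ∀ k, 0 ≤ x k) (hx1 : ∑ k, x k = 1) (hvc : ∀ k ≠ i, v k - v i ≤ c k) :
    ∑ k, v k * x k ≤ v i + ∑ k ∈ univ.filter (· ≠ i), c k * x k := calc
  ∑ k, v k * x k = v i + ∑ k, (v k - v i) * x k := by
    simp only [sub_mul, sum_sub_distrib, ← mul_sum, hx1, mul_one, add_sub_cancel]
  _ = v i + ∑ k ∈ univ.filter (· ≠ i), (v k - v i) * x k := by
    rw [filter_ne', sum_erase _ (by simp)]
  _ ≤ v i + ∑ k ∈ univ.filter (· ≠ i), c k * x k := by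
    gcongr with k hk
    · exact hx0 k
    · exact hvc k (mem_filter.mp hk).2

theorem stmt_4_general {I J : Type*} [Fintype I] [Fintype J] [DecidableEq I] [Nonempty J]
    (R : I → J → ℝ) (x : I → ℝ) (q : J → ℝ) (f : ℝ)
    (hx0 : ∀ i, 0 ≤ x i) (hx1 : ∑ i, x i = 1)
    (hq01 : ∀ j, q j = 0 ∨ q j = 1) (hq1 : ∑ j, q j = 1)
    (hf : ∀ j, q j = 1 → f = ∑ i, R i j * x i) :
    ∀ i, f ≤ ∑ j, R i j * q j +
      ∑ i' ∈ Finset.univ.filter (fun i' => i' ≠ i),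
        (Finset.univ.sup' Finset.univ_nonempty (fun j => R i' j - R i j)) * x i' := by
  intro i
  obtain ⟨j₀, hj₀, hq0⟩ := exists_eq_one_and_eq_zero_of_zero_or_one hq01 hq1
  have hpure : ∑ j, R i j * q j = R i j₀ := by
    rw [sum_eq_single_of_mem j₀ (mem_univ j₀) fun j _ hj => by rw [hq0 j hj, mul_zero],
      hj₀, mul_one]
  rw [hf j₀ hj₀, hpure]
  exact sum_mul_le_add_sum_ne_mul (R · j₀) _ x i hx0 hx1
    fun k _ => le_sup' (fun j => R k j - R i j) (mem_univ j₀)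

theorem stmt_4 {I J : Type*} [Fintype I] [Fintype J] [DecidableEq I] [DecidableEq J] [Nonempty I] [Nonempty J]
    (R : I → J → ℝ) (x : I → ℝ) (q : J → ℝ) (f : ℝ)
    (hx0 : ∀ i, 0 ≤ x i) (hx1 : ∑ i, x i = 1)
    (hq01 : ∀ j, q j = 0 ∨ q j = 1) (hq1 : ∑ j, q j = 1)
    (hf : ∀ j, q j = 1 → f = ∑ i, R i j * x i) :
    ∀ i, f ≤ ∑ j, R i j * q j +
      ∑ i' ∈ Finset.univ.filter (fun i' => i' ≠ i),
        (Finset.univ.sup' Finset.univ_nonempty (fun j => R i' j - R i j)) * x i' :=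
  stmt_4_general R x q f hx0 hx1 hq01 hq1 hf
end

section
/- Let I and J be nonempty finite sets and C : I × J → ℝ. Let x : I → ℝ satisfy x_i ≥ 0 for all i and Σ_{i∈I} x_i = 1, let q : J → ℝ satisfy q_j ∈ {0,1} for all j and Σ_{j∈J} q_j = 1, and let s ∈ ℝ satisfy: for every j ∈ J with q_j = 1, s = Σ_{i∈I} C_{i,j} x_i. Then for every i ∈ I, s ≤ Σ_{j∈J} C_{i,j} q_j + Σ_{i'∈I, i'≠i} (max_{j∈J} (C_{i',j} − C_{i,j})) · x_{i'}. -/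
/-!
Since `q` is a 0–1 vector summing to one, it is the indicator of a single follower strategy `j₀`,
and `s = ∑ i', C i' j₀ * x i'`. As `x` sums to one, this equals
`C i j₀ + ∑_{i' ≠ i} (C i' j₀ - C i j₀) * x i'`, and each coefficient `C i' j₀ - C i j₀` is at most
its maximum over `j`, which may be used because `x` is nonnegative.
-/

open Finset

theorem exists_eq_one_and_eq_zero_of_sum_eq_one {ι R : Type*} [Fintype ι]
    [AddCommMonoidWithOne R] [CharZero R] {q : ι → R}
    (h01 : ∀ i, q i = 0 ∨ q i = 1) (hsum : ∑ i, q i = 1) :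
    ∃ i₀, q i₀ = 1 ∧ ∀ i ≠ i₀, q i = 0 := by
  classical
  have hcard : #{i | q i = 1} = 1 := by
    have hq : ∀ i, q i = if q i = 1 then 1 else 0 := fun i => by
      rcases h01 i with h | h <;> simp [h]
    rw [Fintype.sum_congr _ _ hq, sum_boole] at hsum
    exact_mod_cast hsum
  obtain ⟨i₀, hi₀⟩ := card_eq_one.1 hcard
  have hmem : ∀ i, q i = 1 ↔ i = i₀ := fun i => by
    simpa using congrArg (i ∈ ·) hi₀
  exact ⟨i₀, (hmem i₀).2 rfl, fun i hi => (h01 i).resolve_right (mt (hmem i).1 hi)⟩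

theorem sum_mul_eq_add_sum_ne_sub_mul {ι R : Type*} [Fintype ι] [DecidableEq ι] [CommRing R]
    (c x : ι → R) (hx : ∑ i, x i = 1) (i : ι) :
    ∑ i', c i' * x i' = c i + ∑ i' ∈ univ.filter (fun i' => i' ≠ i), (c i' - c i) * x i' := by
  have hsplit : ∑ i', c i' * x i' = c i * ∑ i', x i' + ∑ i', (c i' - c i) * x i' := by
    rw [mul_sum, ← sum_add_distrib]
    exact sum_congr rfl fun i' _ => by ring
  rw [hsplit, hx, mul_one, sum_filter_of_ne]
  intro i' _ hne heq
  exact hne (by rw [heq, sub_self, zero_mul])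

theorem stmt_5_general {I J : Type*} [Fintype I] [Fintype J] [DecidableEq I] [Nonempty J]
    (C : I → J → ℝ) (x : I → ℝ) (q : J → ℝ) (s : ℝ)
    (hx0 : ∀ i, 0 ≤ x i) (hx1 : ∑ i, x i = 1)
    (hq01 : ∀ j, q j = 0 ∨ q j = 1) (hq1 : ∑ j, q j = 1)
    (hs : ∀ j, q j = 1 → s = ∑ i, C i j * x i) :
    ∀ i, s ≤ ∑ j, C i j * q j +
      ∑ i' ∈ Finset.univ.filter (fun i' => i' ≠ i),
        (Finset.univ.sup' Finset.univ_nonempty (fun j => C i' j - C i j)) * x i' := by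
  intro i
  obtain ⟨j₀, hqj₀, hq_ne⟩ := exists_eq_one_and_eq_zero_of_sum_eq_one hq01 hq1
  have hCq : ∑ j, C i j * q j = C i j₀ := by
    rw [Fintype.sum_eq_single j₀ fun j hj => by rw [hq_ne j hj, mul_zero], hqj₀, mul_one]
  rw [hs j₀ hqj₀, hCq, sum_mul_eq_add_sum_ne_sub_mul (C · j₀) x hx1 i]
  gcongr with i'
  · exact hx0 i'
  · exact le_sup' (fun j => C i' j - C i j) (mem_univ j₀)

theorem stmt_5 {I J : Type*} [Fintype I] [Fintype J] [DecidableEq I] [DecidableEq J] [Nonempty I] [Nonempty J]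
    (C : I → J → ℝ) (x : I → ℝ) (q : J → ℝ) (s : ℝ)
    (hx0 : ∀ i, 0 ≤ x i) (hx1 : ∑ i, x i = 1)
    (hq01 : ∀ j, q j = 0 ∨ q j = 1) (hq1 : ∑ j, q j = 1)
    (hs : ∀ j, q j = 1 → s = ∑ i, C i j * x i) :
    ∀ i, s ≤ ∑ j, C i j * q j +
      ∑ i' ∈ Finset.univ.filter (fun i' => i' ≠ i),
        (Finset.univ.sup' Finset.univ_nonempty (fun j => C i' j - C i j)) * x i' :=
  stmt_5_general C x q s hx0 hx1 hq01 hq1 hs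
end

section
/- Let J be a nonempty finite set of targets, and let Dp, Du : J → ℝ satisfy Dp(j) ≥ Du(j) for all j ∈ J. Let c : J → ℝ satisfy 0 ≤ c_j ≤ 1 for all j ∈ J, let q : J → ℝ satisfy q_j ∈ {0,1} for all j and Σ_{j∈J} q_j = 1, and let f ∈ ℝ satisfy: for every j' ∈ J with q_{j'} = 1, f = (Dp(j') − Du(j')) · c_{j'} + Du(j'). Then for every j ∈ J, f ≤ (Dp(j) − Du(j)) · c_j + Du(j) + Σ_{j'∈J, j'≠j} (Dp(j') − Du(j)) · q_{j'}. -/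
/-! The attacker's pure strategy `q` is the indicator of a single target `j★`, so `f` is the
defender's utility at `j★`. If `j = j★` the sum vanishes and the inequality is an equality.
Otherwise the sum is `Dp j★ - Du j`, and the right-hand side is at least `Dp j★`, which bounds the
utility at `j★` from above because `c j★ ≤ 1`. -/

open Finset

theorem exists_eq_pi_single_of_sum_eq_one {ι R : Type*} [Fintype ι] [DecidableEq ι]
    [AddCommMonoidWithOne R] [CharZero R] {q : ι → R} (h01 : ∀ i, q i = 0 ∨ q i = 1)
    (hsum : ∑ i, q i = 1) : ∃ i, q = Pi.single i 1 := by
  classical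
  have hcard : #(univ.filter fun i => q i = 1) = 1 := by
    have hq : q = fun i => if q i = 1 then 1 else 0 := by
      funext i
      rcases h01 i with h | h <;> simp [h]
    rw [hq, sum_boole] at hsum
    exact_mod_cast hsum
  obtain ⟨i, hi⟩ := card_eq_one.mp hcard
  refine ⟨i, funext fun k => ?_⟩
  have hk : q k = 1 ↔ k = i := by simpa using congrArg (k ∈ ·) hi
  rcases eq_or_ne k i with rfl | hne
  · simpa using hk.mpr rfl
  · simpa [hne, hk] using h01 k

theorem sum_filter_ne_mul_pi_single {ι R : Type*} [Fintype ι] [DecidableEq ι] [Semiring R]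
    (g : ι → R) (i j : ι) :
    ∑ k ∈ univ.filter (fun k => k ≠ j), g k * (Pi.single i 1 : ι → R) k =
      if i = j then 0 else g i := by
  split_ifs with h <;> simp [Pi.single_apply, h]

theorem le_sub_mul_add {R : Type*} [Ring R] [PartialOrder R] [IsOrderedRing R] {a b t : R}
    (hab : a ≤ b) (ht : 0 ≤ t) : a ≤ (b - a) * t + a :=
  le_add_of_nonneg_left (mul_nonneg (sub_nonneg.mpr hab) ht)

theorem sub_mul_add_le {R : Type*} [Ring R] [PartialOrder R] [IsOrderedRing R] {a b t : R}
    (hab : a ≤ b) (ht : t ≤ 1) : (b - a) * t + a ≤ b :=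
  calc (b - a) * t + a ≤ (b - a) * 1 + a := by gcongr
    _ = b := by rw [mul_one, sub_add_cancel]

theorem stmt_6_general {J : Type*} [Fintype J] [DecidableEq J]
    (Dp Du : J → ℝ) (hD : ∀ j, Du j ≤ Dp j)
    (c : J → ℝ) (hc : ∀ j, 0 ≤ c j ∧ c j ≤ 1)
    (q : J → ℝ) (hq01 : ∀ j, q j = 0 ∨ q j = 1) (hq1 : ∑ j, q j = 1)
    (f : ℝ) (hf : ∀ j', q j' = 1 → f = (Dp j' - Du j') * c j' + Du j') :
    ∀ j, f ≤ (Dp j - Du j) * c j + Du j +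
      ∑ j' ∈ Finset.univ.filter (fun j' => j' ≠ j), (Dp j' - Du j) * q j' := by
  intro j
  obtain ⟨i, rfl⟩ := exists_eq_pi_single_of_sum_eq_one hq01 hq1
  rw [hf i (by simp), sum_filter_ne_mul_pi_single]
  split_ifs with hij
  · rw [hij, add_zero]
  · calc (Dp i - Du i) * c i + Du i ≤ Dp i := sub_mul_add_le (hD i) (hc i).2
      _ = Du j + (Dp i - Du j) := by ring
      _ ≤ (Dp j - Du j) * c j + Du j + (Dp i - Du j) := by
        gcongr
        exact le_sub_mul_add (hD j) (hc j).1

theorem stmt_6 {J : Type*} [Fintype J] [DecidableEq J] [Nonempty J]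
    (Dp Du : J → ℝ) (hD : ∀ j, Du j ≤ Dp j)
    (c : J → ℝ) (hc : ∀ j, 0 ≤ c j ∧ c j ≤ 1)
    (q : J → ℝ) (hq01 : ∀ j, q j = 0 ∨ q j = 1) (hq1 : ∑ j, q j = 1)
    (f : ℝ) (hf : ∀ j', q j' = 1 → f = (Dp j' - Du j') * c j' + Du j') :
    ∀ j, f ≤ (Dp j - Du j) * c j + Du j +
      ∑ j' ∈ Finset.univ.filter (fun j' => j' ≠ j), (Dp j' - Du j) * q j' :=
  stmt_6_general Dp Du hD c hc q hq01 hq1 f hf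
end

section
/- Let J be a nonempty finite set of targets, and let Ap, Au : J → ℝ satisfy Ap(j) ≤ Au(j) for all j ∈ J. Let q : J → ℝ satisfy q_j ∈ {0,1} for all j and Σ_{j∈J} q_j = 1. Then for every j ∈ J, Σ_{j'∈J, j'≠j} (Au(j') − Ap(j)) · q_{j'} ≤ (max_{l∈J} max(Ap(l), Au(l)) − min(Ap(j), Au(j))) · (1 − q_j). -/
open Finset

lemma sub_le_sup'_max_sub_min {J : Type*} {s : Finset J} (hs : s.Nonempty) (Ap Au : J → ℝ)
    {j' : J} (hj' : j' ∈ s) (j : J) :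
    Au j' - Ap j ≤ s.sup' hs (fun l => max (Ap l) (Au l)) - min (Ap j) (Au j) := by
  have hAu : Au j' ≤ s.sup' hs (fun l => max (Ap l) (Au l)) :=
    le_sup'_of_le _ hj' (le_max_right _ _)
  linarith [min_le_left (Ap j) (Au j)]

lemma sum_filter_ne_eq_one_sub {J : Type*} [Fintype J] [DecidableEq J] (q : J → ℝ)
    (hq1 : ∑ j, q j = 1) (j : J) :
    ∑ j' ∈ univ.filter (fun j' => j' ≠ j), q j' = 1 - q j := by
  rw [filter_ne', sum_erase_eq_sub (mem_univ j), hq1]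

theorem stmt_9_general {J : Type*} [Fintype J] [DecidableEq J] [Nonempty J]
    (Ap Au : J → ℝ)
    (q : J → ℝ) (hq01 : ∀ j, q j = 0 ∨ q j = 1) (hq1 : ∑ j, q j = 1) :
    ∀ j, ∑ j' ∈ Finset.univ.filter (fun j' => j' ≠ j), (Au j' - Ap j) * q j'
      ≤ (Finset.univ.sup' Finset.univ_nonempty (fun l => max (Ap l) (Au l))
          - min (Ap j) (Au j)) * (1 - q j) := by
  intro j
  set M := univ.sup' univ_nonempty (fun l => max (Ap l) (Au l))
  have hq_nonneg : ∀ j', 0 ≤ q j' := fun j' => by rcases hq01 j' with h | h <;> simp [h]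
  calc ∑ j' ∈ univ.filter (fun j' => j' ≠ j), (Au j' - Ap j) * q j'
      ≤ ∑ j' ∈ univ.filter (fun j' => j' ≠ j), (M - min (Ap j) (Au j)) * q j' :=
        sum_le_sum fun j' _ => mul_le_mul_of_nonneg_right
          (sub_le_sup'_max_sub_min univ_nonempty Ap Au (mem_univ j') j) (hq_nonneg j')
    _ = (M - min (Ap j) (Au j)) * (1 - q j) := by
        rw [← mul_sum, sum_filter_ne_eq_one_sub q hq1]

theorem stmt_9 {J : Type*} [Fintype J] [DecidableEq J] [Nonempty J]
    (Ap Au : J → ℝ) (hA : ∀ j, Ap j ≤ Au j)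
    (q : J → ℝ) (hq01 : ∀ j, q j = 0 ∨ q j = 1) (hq1 : ∑ j, q j = 1) :
    ∀ j, ∑ j' ∈ Finset.univ.filter (fun j' => j' ≠ j), (Au j' - Ap j) * q j'
      ≤ (Finset.univ.sup' Finset.univ_nonempty (fun l => max (Ap l) (Au l))
          - min (Ap j) (Au j)) * (1 - q j) :=
  stmt_9_general Ap Au q hq01 hq1
end

section
/- Let I and J be nonempty finite sets and R : I × J → ℝ. Let x : I → ℝ satisfy x_i ≥ 0 for all i and Σ_{i∈I} x_i = 1, let q : J → ℝ satisfy q_j ∈ {0,1} for all j and Σ_{j∈J} q_j = 1, and let f ∈ ℝ satisfy: for every j' ∈ J with q_{j'} = 1, f = Σ_{i∈I} R_{i,j'} x_i. Then for every j ∈ J, f ≤ Σ_{i∈I} R_{i,j} x_i + (max_{l∈J} max_{i∈I} (R_{i,l} − R_{i,j})) · (1 − q_j). -/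
/-!
The follower plays some pure strategy `j'` (the unique `j'` with `q j' = 1`), so `f` is the
leader's expected payoff against `j'`. If `q j = 1` the constraint is an equality. Otherwise
the payoffs against `j'` exceed those against `j` by at most `M` in every row, and averaging
over the mixed strategy `x` gives `f ≤ ∑ i, R i j * x i + M`.
-/

open Finset

theorem exists_eq_one_of_sum_eq_one {ι : Type*} [Fintype ι] {q : ι → ℝ}
    (hq01 : ∀ j, q j = 0 ∨ q j = 1) (hq1 : ∑ j, q j = 1) : ∃ j, q j = 1 := by
  obtain ⟨j, -, hj⟩ := exists_ne_zero_of_sum_ne_zero (hq1 ▸ one_ne_zero : ∑ j, q j ≠ 0)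
  exact ⟨j, (hq01 j).resolve_left hj⟩

theorem sum_mul_le_sum_mul_add_of_sub_le {ι : Type*} [Fintype ι] {a b x : ι → ℝ} {M : ℝ}
    (hab : ∀ i, a i - b i ≤ M) (hx0 : ∀ i, 0 ≤ x i) (hx1 : ∑ i, x i = 1) :
    ∑ i, a i * x i ≤ ∑ i, b i * x i + M := by
  have h : ∑ i, (a i - b i) * x i ≤ ∑ i, M * x i :=
    sum_le_sum fun i _ => mul_le_mul_of_nonneg_right (hab i) (hx0 i)
  simp only [sub_mul, sum_sub_distrib, ← mul_sum, hx1, mul_one] at h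
  linarith

theorem stmt_13 {I J : Type*} [Fintype I] [Fintype J] [Nonempty I] [Nonempty J]
    (R : I → J → ℝ) (x : I → ℝ) (q : J → ℝ) (f : ℝ)
    (hx0 : ∀ i, 0 ≤ x i) (hx1 : ∑ i, x i = 1)
    (hq01 : ∀ j, q j = 0 ∨ q j = 1) (hq1 : ∑ j, q j = 1)
    (hf : ∀ j', q j' = 1 → f = ∑ i, R i j' * x i) :
    ∀ j, f ≤ ∑ i, R i j * x i +
      (Finset.univ.sup' Finset.univ_nonempty (fun l =>
        Finset.univ.sup' Finset.univ_nonempty (fun i => R i l - R i j))) * (1 - q j) := by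
  intro j
  obtain ⟨j', hj'⟩ := exists_eq_one_of_sum_eq_one hq01 hq1
  rcases hq01 j with h0 | h1
  · have hle : ∀ i, R i j' - R i j ≤ univ.sup' univ_nonempty (fun l =>
        univ.sup' univ_nonempty (fun i => R i l - R i j)) := fun i =>
      le_sup'_of_le _ (mem_univ j') (le_sup' (fun i => R i j' - R i j) (mem_univ i))
    rw [hf j' hj', h0, sub_zero, mul_one]
    exact sum_mul_le_sum_mul_add_of_sub_le hle hx0 hx1
  · rw [hf j h1, h1, sub_self, mul_zero, add_zero]
end
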